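/- Let p : Y → B be a continuous map equipped with a fibrewise HM-space structure τ, and let e : B → Y be a continuous section of p (i.e., p ∘ e = id_B). Define the multiplication m : Y ×_B Y → Y by m(a,b) := τ(a, e(p(a)), b). Then m is continuous, satisfies p(m(a,b)) = p(a), and makes p a fibrewise H-space with section e: the maps m ∘ (m ×_B id) and m ∘ (id ×_B m) from Y ×_B Y ×_B Y to Y are fibrewise homotopic (associativity up to fibrewise homotopy), and the maps a ↦ m(a, e(p(a))) and a ↦ m(e(p(a)), a) from Y to Y are each fibrewise homotopic to the identity of Y (the section acts as an identity up to fibrewise homotopy). -/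

import Mathlib

/-- A fibrewise homotopy over `p : Y → B` between maps `f, g : X → Y`: a homotopy
`H : X × [0,1] → Y` from `f` to `g` with `p (H (x,t)) = p (f x)` for all `x, t`. -/
def FibrewiseHomotopic {X Y B : Type*} [TopologicalSpace X] [TopologicalSpace Y]
    (p : Y → B) (f g : X → Y) : Prop :=
  ∃ H : C(X × unitInterval, Y),
    (∀ x, H (x, 0) = f x) ∧ (∀ x, H (x, 1) = g x) ∧ ∀ x t, p (H (x, t)) = p (f x)

section

variable {X Z Y B : Type*} [TopologicalSpace X] [TopologicalSpace Z] [TopologicalSpace Y]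
  {p : Y → B} {f g : X → Y}

theorem FibrewiseHomotopic.comp_right (h : FibrewiseHomotopic p f g) {u : Z → X}
    (hu : Continuous u) : FibrewiseHomotopic p (f ∘ u) (g ∘ u) := by
  obtain ⟨H, h0, h1, hH⟩ := h
  exact ⟨H.comp ⟨fun zt => (u zt.1, zt.2), by fun_prop⟩,
    fun z => h0 (u z), fun z => h1 (u z), fun z t => hH (u z) t⟩

theorem FibrewiseHomotopic.congr (h : FibrewiseHomotopic p f g) {f' g' : X → Y}
    (hf : ∀ x, f x = f' x) (hg : ∀ x, g x = g' x) : FibrewiseHomotopic p f' g' := by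
  obtain ⟨H, h0, h1, hH⟩ := h
  exact ⟨H, fun x => (h0 x).trans (hf x), fun x => (h1 x).trans (hg x),
    fun x t => (hH x t).trans (congrArg p (hf x))⟩

end

/-- If `p : Y → B` is a fibrewise HM-space with fibrewise Mal'cev operation `τ`
(continuous on the fibrewise triple product, commuting with `p`, para-associative up
to fibrewise homotopy, and satisfying the Mal'cev conditions up to fibrewise
homotopy), and `e : B → Y` is a continuous section of `p`, then the multiplication
`m(a,b) := τ(a, e(p(a)), b)` is continuous, satisfies `p(m(a,b)) = p(a)`, and makes
`p` a fibrewise H-space: `m` is associative up to fibrewise homotopy and the section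
acts as a two-sided identity up to fibrewise homotopy. -/
theorem fibrewise_HM_with_section_is_H_space {B Y : Type*}
    [TopologicalSpace B] [TopologicalSpace Y]
    (p : Y → B) (hp : Continuous p)
    (τ : {t : Y × Y × Y // p t.1 = p t.2.1 ∧ p t.2.1 = p t.2.2} → Y)
    (hτc : Continuous τ)
    (hbase : ∀ t, p (τ t) = p t.1.1)
    (hpara : FibrewiseHomotopic p
      (fun q : {t : Y × Y × Y × Y × Y // p t.1 = p t.2.1 ∧ p t.2.1 = p t.2.2.1 ∧
          p t.2.2.1 = p t.2.2.2.1 ∧ p t.2.2.2.1 = p t.2.2.2.2} =>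
        τ ⟨(τ ⟨(q.1.1, q.1.2.1, q.1.2.2.1), ⟨q.2.1, q.2.2.1⟩⟩,
            q.1.2.2.2.1, q.1.2.2.2.2),
          ⟨(hbase ⟨(q.1.1, q.1.2.1, q.1.2.2.1), ⟨q.2.1, q.2.2.1⟩⟩).trans
            (q.2.1.trans (q.2.2.1.trans q.2.2.2.1)), q.2.2.2.2⟩⟩)
      (fun q =>
        τ ⟨(q.1.1, q.1.2.1,
            τ ⟨(q.1.2.2.1, q.1.2.2.2.1, q.1.2.2.2.2), ⟨q.2.2.2.1, q.2.2.2.2⟩⟩),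
          ⟨q.2.1, q.2.2.1.trans
            (hbase ⟨(q.1.2.2.1, q.1.2.2.2.1, q.1.2.2.2.2),
              ⟨q.2.2.2.1, q.2.2.2.2⟩⟩).symm⟩⟩))
    (hmal₁ : FibrewiseHomotopic p
      (fun a : {a : Y × Y // p a.1 = p a.2} => τ ⟨(a.1.1, a.1.2, a.1.2), ⟨a.2, rfl⟩⟩)
      (fun a => a.1.1))
    (hmal₂ : FibrewiseHomotopic p
      (fun a : {a : Y × Y // p a.1 = p a.2} => τ ⟨(a.1.1, a.1.1, a.1.2), ⟨rfl, a.2⟩⟩)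
      (fun a => a.1.2))
    (e : B → Y) (hec : Continuous e) (he : ∀ b, p (e b) = b) :
    ∃ m : {a : Y × Y // p a.1 = p a.2} → Y,
      (∀ a : {a : Y × Y // p a.1 = p a.2},
        m a = τ ⟨(a.1.1, e (p a.1.1), a.1.2), ⟨(he _).symm, (he _).trans a.2⟩⟩) ∧
      Continuous m ∧
      ∃ hm : ∀ a : {a : Y × Y // p a.1 = p a.2}, p (m a) = p a.1.1,
        FibrewiseHomotopic p
          (fun t : {t : Y × Y × Y // p t.1 = p t.2.1 ∧ p t.2.1 = p t.2.2} =>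
            m ⟨(m ⟨(t.1.1, t.1.2.1), t.2.1⟩, t.1.2.2),
              (hm ⟨(t.1.1, t.1.2.1), t.2.1⟩).trans (t.2.1.trans t.2.2)⟩)
          (fun t =>
            m ⟨(t.1.1, m ⟨(t.1.2.1, t.1.2.2), t.2.2⟩),
              t.2.1.trans (hm ⟨(t.1.2.1, t.1.2.2), t.2.2⟩).symm⟩) ∧
        FibrewiseHomotopic p (fun y : Y => m ⟨(y, e (p y)), (he _).symm⟩) id ∧
        FibrewiseHomotopic p (fun y : Y => m ⟨(e (p y), y), he _⟩) id := by
  refine ⟨fun a => τ ⟨(a.1.1, e (p a.1.1), a.1.2), ⟨(he _).symm, (he _).trans a.2⟩⟩,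
    fun _ => rfl, hτc.comp (by fun_prop), fun _ => hbase _, ?assoc, ?unit_right, ?unit_left⟩
  case assoc =>
    -- both bracketings of `m` on `(a, b, c)` are bracketings of `τ` on `(a, e, b, e, c)` with
    -- `e = e (p a)`, since `p (m (a, b)) = p a = p b`
    refine (hpara.comp_right
      (u := fun t => ⟨(t.1.1, e (p t.1.1), t.1.2.1, e (p t.1.1), t.1.2.2),
        (he _).symm, (he _).trans t.2.1, ((he _).trans t.2.1).symm,
        (he _).trans (t.2.1.trans t.2.2)⟩) (by fun_prop)).congr (fun t => ?_) (fun t => ?_)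
    · exact congrArg τ (Subtype.ext (by simp only [hbase]))
    · exact congrArg τ (Subtype.ext (by simp only [t.2.1]))
  case unit_right => exact hmal₁.comp_right (by fun_prop)
  case unit_left =>
    refine (hmal₂.comp_right (u := fun y => ⟨(e (p y), y), he _⟩) (by fun_prop)).congr
      (fun y => congrArg τ (Subtype.ext ?_)) fun _ => rfl
    simp only [he]
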